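/- arXiv:quant-ph/0303154 — 5 statements merged into one kernel-verified Lean document; each statement's English description precedes it below -/
import Mathlib

section
/- Let S be a finite alphabet with N ≥ 2 letters and let P : S → ℚ be a probability distribution with strictly positive rational values, say P(x) = k_x/m with common denominator m. For n a multiple of m, the number of words x⃗ ∈ S^n whose composition class (empirical distribution) equals P is the multinomial coefficient n!/∏_{x∈S}(nP(x))!. Then, as n → ∞ through multiples of m, the ratio of this multinomial coefficient to exp(nH(P)) / ((2πn)^{(N-1)/2} · √(∏_{x∈S} P(x))) tends to 1. -/
open Filter Real


lemma fact_eq (j : ℕ) (hj : 0 < j) :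
    (Nat.factorial j : ℝ) = Stirling.stirlingSeq j * (Real.sqrt (2*j) * ((j:ℝ)/Real.exp 1)^j) := by
  have hj' : (0:ℝ) < (j:ℝ) := by exact_mod_cast hj
  have hD : (0:ℝ) < Real.sqrt (2*j) * ((j:ℝ)/Real.exp 1)^j := by positivity
  rw [Stirling.stirlingSeq]
  field_simp

lemma key_ident
    (S : Type*) [Fintype S]
    (m : ℕ) (hm : 0 < m) (k : S → ℕ) (hk : ∀ x, 0 < k x) (hksum : ∑ x, k x = m)
    (P : S → ℝ) (hP : ∀ x, P x = (k x : ℝ) / (m : ℝ)) (t : ℕ) (ht : 0 < t) :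
    ((Nat.factorial (m * t) : ℝ) / ∏ x, (Nat.factorial (k x * t) : ℝ)) /
          (Real.exp (((m * t : ℕ) : ℝ) * (-∑ x, P x * Real.log (P x))) /
            ((2 * Real.pi * ((m * t : ℕ) : ℝ)) ^ (((Fintype.card S : ℝ) - 1) / 2) *
              Real.sqrt (∏ x, P x)))
    = (Stirling.stirlingSeq (m*t) / ∏ x, Stirling.stirlingSeq (k x * t)) *
        Real.pi ^ (((Fintype.card S : ℝ) - 1) / 2) := by
  have hn : 0 < m * t := Nat.mul_pos hm ht
  have hn' : (0:ℝ) < ((m*t:ℕ):ℝ) := by exact_mod_cast hn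
  have hm' : (0:ℝ) < (m:ℝ) := by exact_mod_cast hm
  have hPpos : ∀ x, 0 < P x := fun x => by
    rw [hP]; have : (0:ℝ) < (k x : ℝ) := by exact_mod_cast hk x
    positivity
  have hkx : ∀ x : S, ((k x * t : ℕ):ℝ) = (P x) * ((m*t : ℕ):ℝ) := by
    intro x
    rw [hP]
    push_cast
    field_simp
  -- product of P^(k x * t) equals exp of entropy-like sum
  have hprod : ∏ x, P x ^ (k x * t)
      = Real.exp (((m*t:ℕ):ℝ) * ∑ x, P x * Real.log (P x)) := by
    rw [Finset.mul_sum, Real.exp_sum]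
    refine Finset.prod_congr rfl fun x _ => ?_
    conv_lhs => rw [← Real.exp_log (hPpos x)]
    rw [← Real.exp_nat_mul]
    congr 1
    rw [hkx x]; ring
  have hQpos : 0 < ∏ x, P x ^ (k x * t) := Finset.prod_pos fun x _ => pow_pos (hPpos x) _
  have h2 : Real.exp (((m * t : ℕ) : ℝ) * (-∑ x, P x * Real.log (P x)))
      = (∏ x, P x ^ (k x * t))⁻¹ := by
    rw [mul_neg, Real.exp_neg, hprod]
  -- the product of √(2 k x t)
  set N := Fintype.card S with hNdef
  have hA : ∏ x, Real.sqrt (2*((k x*t:ℕ):ℝ))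
      = (2*((m*t:ℕ):ℝ)) ^ ((N:ℝ)/2) * Real.sqrt (∏ x, P x) := by
    simp only [Real.sqrt_eq_rpow]
    rw [Real.finset_prod_rpow _ _ (fun x _ => by have := hkx x; have := hPpos x; positivity)]
    have : ∏ x, 2*((k x*t:ℕ):ℝ) = (2*((m*t:ℕ):ℝ))^N * ∏ x, P x := by
      rw [show ((2*((m*t:ℕ):ℝ))^N : ℝ) = ∏ _x : S, (2*((m*t:ℕ):ℝ)) by
        rw [Finset.prod_const, Finset.card_univ], ← Finset.prod_mul_distrib]
      exact Finset.prod_congr rfl fun x _ => by rw [hkx x]; ring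
    rw [this, Real.mul_rpow (by positivity) (Finset.prod_nonneg fun x _ => (hPpos x).le),
      ← Real.rpow_natCast (2*((m*t:ℕ):ℝ)) N, ← Real.rpow_mul (by positivity)]
    norm_num
    exact Or.inl (by rw [mul_one_div])
  have hB : ∏ x, (((k x*t:ℕ):ℝ)/Real.exp 1)^(k x*t)
      = (∏ x, P x ^ (k x * t)) * (((m*t:ℕ):ℝ)/Real.exp 1)^(m*t) := by
    have : ∀ x : S, (((k x*t:ℕ):ℝ)/Real.exp 1)^(k x*t)
        = P x ^ (k x * t) * (((m*t:ℕ):ℝ)/Real.exp 1)^(k x * t) := by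
      intro x
      rw [hkx x, mul_div_assoc, mul_pow]
    rw [Finset.prod_congr rfl fun x _ => this x, Finset.prod_mul_distrib,
      Finset.prod_pow_eq_pow_sum]
    congr 2
    rw [← Finset.sum_mul, hksum]
  -- positivity of stirling sequences
  have hspos : ∀ j : ℕ, 0 < j → 0 < Stirling.stirlingSeq j := by
    intro j hj
    have := Stirling.stirlingSeq'_pos (j - 1)
    rwa [Nat.sub_add_cancel hj] at this
  have hs1 : 0 < Stirling.stirlingSeq (m*t) := hspos _ hn
  have hs2 : 0 < ∏ x, Stirling.stirlingSeq (k x * t) :=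
    Finset.prod_pos fun x _ => hspos _ (Nat.mul_pos (hk x) ht)
  -- rewrite factorials
  rw [fact_eq _ hn,
    show (∏ x, ((Nat.factorial (k x*t) : ℕ):ℝ)) = ∏ x, (Stirling.stirlingSeq (k x*t) *
        (Real.sqrt (2*((k x*t:ℕ):ℝ)) * (((k x*t:ℕ):ℝ)/Real.exp 1)^(k x*t))) from
      Finset.prod_congr rfl fun x _ => fact_eq _ (Nat.mul_pos (hk x) ht),
    Finset.prod_mul_distrib, Finset.prod_mul_distrib, hA, hB, h2]
  have h3 : (2 * Real.pi * ((m*t:ℕ):ℝ)) ^ (((N:ℝ)-1)/2)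
      = (2*((m*t:ℕ):ℝ)) ^ (((N:ℝ)-1)/2) * Real.pi ^ (((N:ℝ)-1)/2) := by
    rw [show (2 * Real.pi * ((m*t:ℕ):ℝ)) = (2*((m*t:ℕ):ℝ)) * Real.pi by ring,
      Real.mul_rpow (by positivity) Real.pi_pos.le]
  have hC : (2*((m*t:ℕ):ℝ)) ^ ((N:ℝ)/2)
      = (2*((m*t:ℕ):ℝ)) ^ ((1:ℝ)/2) * (2*((m*t:ℕ):ℝ)) ^ (((N:ℝ)-1)/2) := by
    rw [← Real.rpow_add (by positivity)]
    ring_nf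
  rw [h3, Real.sqrt_eq_rpow, hC]
  have e1 : (0:ℝ) < (2*((m*t:ℕ):ℝ)) ^ ((1:ℝ)/2) := by positivity
  have e2 : (0:ℝ) < (2*((m*t:ℕ):ℝ)) ^ (((N:ℝ)-1)/2) := by positivity
  have e3 : (0:ℝ) < Real.pi ^ (((N:ℝ)-1)/2) := Real.rpow_pos_of_pos Real.pi_pos _
  have e4 : (0:ℝ) < Real.sqrt (∏ x, P x) :=
    Real.sqrt_pos.mpr (Finset.prod_pos fun x _ => hPpos x)
  have e5 : (0:ℝ) < (((m*t:ℕ):ℝ)/Real.exp 1)^(m*t) := by positivity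
  field_simp

/-- The number of words of length `n = m * t` over a finite alphabet `S` whose
composition class (empirical distribution) equals the rational probability
distribution `P x = k x / m` is the multinomial coefficient
`n! / ∏ x (n P x)!`, and as `n → ∞` through multiples of `m` this multinomial
coefficient is asymptotic to `exp (n H(P)) / ((2 π n)^{(N-1)/2} √(∏ P x))`. -/
theorem multinomial_asymptotics
    (S : Type*) [Fintype S] (hN : 2 ≤ Fintype.card S)
    (m : ℕ) (hm : 0 < m) (k : S → ℕ) (hk : ∀ x, 0 < k x) (hksum : ∑ x, k x = m)
    (P : S → ℝ) (hP : ∀ x, P x = (k x : ℝ) / (m : ℝ)) :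
    Filter.Tendsto
      (fun t : ℕ =>
        ((Nat.factorial (m * t) : ℝ) / ∏ x, (Nat.factorial (k x * t) : ℝ)) /
          (Real.exp (((m * t : ℕ) : ℝ) * (-∑ x, P x * Real.log (P x))) /
            ((2 * Real.pi * ((m * t : ℕ) : ℝ)) ^ (((Fintype.card S : ℝ) - 1) / 2) *
              Real.sqrt (∏ x, P x))))
      Filter.atTop (nhds 1) := by
  set N := Fintype.card S with hNdef
  have hsq : (0:ℝ) < Real.sqrt Real.pi := Real.sqrt_pos.mpr Real.pi_pos
  have hmul : ∀ c : ℕ, 0 < c → Filter.Tendsto (fun t : ℕ => c * t) atTop atTop := by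
    intro c hc
    exact Filter.tendsto_atTop_mono (fun t => Nat.le_mul_of_pos_left t hc) tendsto_id
  have hlim : Filter.Tendsto
      (fun t : ℕ => Stirling.stirlingSeq (m*t) / ∏ x, Stirling.stirlingSeq (k x*t))
      atTop (nhds (Real.sqrt Real.pi / (Real.sqrt Real.pi)^N)) := by
    apply Filter.Tendsto.div
    · exact Stirling.tendsto_stirlingSeq_sqrt_pi.comp (hmul m hm)
    · have := tendsto_finset_prod (f := fun x (t : ℕ) => Stirling.stirlingSeq (k x * t))
        (x := atTop) (a := fun _ => Real.sqrt Real.pi) (Finset.univ : Finset S)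
        (fun x _ => Stirling.tendsto_stirlingSeq_sqrt_pi.comp (hmul (k x) (hk x)))
      simpa [Finset.prod_const, Finset.card_univ] using this
    · positivity
  have hone : (Real.sqrt Real.pi / (Real.sqrt Real.pi)^N) * Real.pi ^ (((N:ℝ)-1)/2) = 1 := by
    rw [Real.sqrt_eq_rpow, ← Real.rpow_natCast (Real.pi ^ ((1:ℝ)/2)) N,
      ← Real.rpow_mul Real.pi_pos.le, ← Real.rpow_sub Real.pi_pos,
      ← Real.rpow_add Real.pi_pos]
    rw [show (1:ℝ)/2 - 1/2*(N:ℝ) + ((N:ℝ)-1)/2 = 0 by ring, Real.rpow_zero]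
  have hmain := hlim.mul_const (Real.pi ^ (((N:ℝ)-1)/2))
  rw [hone] at hmain
  refine hmain.congr' ?_
  filter_upwards [eventually_ge_atTop 1] with t ht
  exact (key_ident S m hm k hk hksum P hP t ht).symm
end

section
/- Let a > 0, Λ > 0, and b ∈ ℝ. Then (1/π) ∫_{−∞}^{+∞} exp( a(Λ + i t)^2 − b(Λ + i t) ) / (Λ + i t) dt = erfc( b / (2√a) ), where the integral is an absolutely convergent integral of a complex-valued function of t ∈ ℝ and the equality is between this complex integral and the real number erfc(b/(2√a)). (This is the contour-integral representation erfc(b/(2√a)) = (1/πi)∫_{Λ−i∞}^{Λ+i∞} (dλ/λ) exp(aλ² − bλ).) -/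
open MeasureTheory

/-- The complementary error function `erfc x = (2/√π) ∫_x^∞ e^{-ξ²} dξ`. -/
noncomputable def erfc (x : ℝ) : ℝ :=
  (2 / Real.sqrt Real.pi) * ∫ ξ in Set.Ioi x, Real.exp (-ξ ^ 2)

/-!
For `Re λ > 0` we have `e^{-bλ}/λ = ∫_b^∞ e^{-sλ} ds`. Inserting this on the line `λ = Λ + it` and
exchanging the two integrals (the integrand is dominated by `e^{aΛ²} e^{-at²} e^{-Λs}`), the
`t`-integral becomes a Gaussian integral, `∫ e^{aλ² - sλ} dt = √(π/a) e^{-s²/(4a)}`, independent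
of `Λ`; what remains is `(1/π) √(π/a) ∫_b^∞ e^{-s²/(4a)} ds = erfc (b/(2√a))`.
-/

open Set Complex Real

theorem integral_Ioi_cexp_sub_mul (w : ℂ) {z : ℂ} (hz : 0 < z.re) (c : ℝ) :
    ∫ s in Ioi c, cexp (w - s * z) = cexp (w - c * z) / z := by
  have h := integral_exp_mul_complex_Ioi (a := -z) (by simpa using hz) c
  simp only [neg_mul, neg_div_neg_eq] at h
  simp only [sub_eq_add_neg, Complex.exp_add, integral_const_mul, mul_comm _ z, h, mul_div_assoc]

theorem integral_cexp_quadratic_vertical_line {a : ℝ} (ha : 0 < a) (Λ : ℝ) (c : ℂ) :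
    ∫ t : ℝ, cexp (a * (Λ + t * I) ^ 2 - c * (Λ + t * I)) =
      √(π / a) * cexp (-c ^ 2 / (4 * a)) := by
  have hexp (t : ℝ) : (a : ℂ) * (Λ + t * I) ^ 2 - c * (Λ + t * I) =
      -a * t ^ 2 + (2 * a * Λ - c) * I * t + (a * Λ ^ 2 - c * Λ) := by
    linear_combination (a * t ^ 2 : ℂ) * I_sq
  simp_rw [hexp]
  rw [integral_cexp_quadratic (by simpa using ha)]
  congr 1
  · rw [neg_neg, Real.sqrt_eq_rpow, ofReal_cpow (by positivity)]
    norm_num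
  · have ha' : (a : ℂ) ≠ 0 := by exact_mod_cast ha.ne'
    congr 1
    field_simp
    linear_combination (2 * a * Λ - c) ^ 2 * I_sq

theorem integral_Ioi_exp_neg_div_sq {σ : ℝ} (hσ : 0 < σ) (c : ℝ) :
    ∫ s in Ioi c, rexp (-(s / σ) ^ 2) = σ * √π / 2 * erfc (c / σ) := by
  have h := integral_comp_mul_left_Ioi (fun x => rexp (-x ^ 2)) c (inv_pos.2 hσ)
  simp only [smul_eq_mul, ← div_eq_inv_mul, inv_inv] at h
  rw [h, erfc]
  field_simp

theorem integrable_cexp_quadratic_vertical_line_prod {a Λ : ℝ} (ha : 0 < a) (hΛ : 0 < Λ) (b : ℝ) :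
    Integrable (Function.uncurry fun t s : ℝ => cexp (a * (Λ + t * I) ^ 2 - s * (Λ + t * I)))
      (volume.prod (volume.restrict (Ioi b))) := by
  refine ((integrable_exp_neg_mul_sq ha).mul_prod
    ((exp_neg_integrableOn_Ioi b hΛ).const_mul (rexp (a * Λ ^ 2)))).mono'
    (by fun_prop : Continuous _).aestronglyMeasurable (ae_of_all _ fun ⟨t, s⟩ => le_of_eq ?_)
  rw [Function.uncurry_apply_pair, Complex.norm_exp, ← Real.exp_add, ← Real.exp_add]
  congr 1
  simp only [sq, sub_re, mul_re, ofReal_re, add_re, I_re, mul_zero, ofReal_im, I_im, mul_one,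
    sub_self, add_zero, add_im, mul_im, zero_add, zero_mul, sub_zero, neg_mul]
  ring

/-- Contour-integral representation of erfc: for `a > 0`, `Λ > 0` and `b ∈ ℝ`,
`(1/π) ∫_{-∞}^{∞} exp(a(Λ+it)² - b(Λ+it))/(Λ+it) dt = erfc(b/(2√a))`;
the integral is absolutely convergent. -/
theorem erfc_contour_integral (a Λ b : ℝ) (ha : 0 < a) (hΛ : 0 < Λ) :
    MeasureTheory.Integrable
        (fun t : ℝ =>
          Complex.exp ((a : ℂ) * ((Λ : ℂ) + (t : ℂ) * Complex.I) ^ 2 -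
              (b : ℂ) * ((Λ : ℂ) + (t : ℂ) * Complex.I)) /
            ((Λ : ℂ) + (t : ℂ) * Complex.I)) ∧
      (1 / (Real.pi : ℂ)) *
          (∫ t : ℝ,
            Complex.exp ((a : ℂ) * ((Λ : ℂ) + (t : ℂ) * Complex.I) ^ 2 -
                (b : ℂ) * ((Λ : ℂ) + (t : ℂ) * Complex.I)) /
              ((Λ : ℂ) + (t : ℂ) * Complex.I)) =
        (erfc (b / (2 * Real.sqrt a)) : ℂ) := by
  have hF := integrable_cexp_quadratic_vertical_line_prod ha hΛ b
  have hslice (t : ℝ) : ∫ s in Ioi b, cexp (a * (Λ + t * I) ^ 2 - s * (Λ + t * I)) =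
      cexp (a * (Λ + t * I) ^ 2 - b * (Λ + t * I)) / (Λ + t * I) :=
    integral_Ioi_cexp_sub_mul _ (by simpa using hΛ) b
  refine ⟨hF.integral_prod_left.congr (ae_of_all _ hslice), ?_⟩
  have hgauss (s : ℝ) : (√(π / a) : ℂ) * cexp (-(s : ℂ) ^ 2 / (4 * a)) =
      ((√π / √a * rexp (-(s / (2 * √a)) ^ 2) : ℝ) : ℂ) := by
    rw [Real.sqrt_div' _ ha.le, div_pow, mul_pow, Real.sq_sqrt ha.le]
    push_cast
    ring_nf
  rw [← integral_congr_ae (ae_of_all _ hslice), integral_integral_swap hF]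
  simp_rw [integral_cexp_quadratic_vertical_line ha, hgauss, integral_complex_ofReal,
    integral_const_mul, integral_Ioi_exp_neg_div_sq (by positivity : 0 < 2 * √a)]
  rw [one_div, ← ofReal_inv, ← ofReal_mul]
  congr 1
  field_simp
  rw [Real.sq_sqrt pi_pos.le]
end

section
/- Let S be a finite alphabet, Q : S → ℝ a probability distribution with Q(x) > 0 for all x, and R ∈ ℝ. For λ > −1 define Z(λ) = ∑_{x∈S} Q(x)^{1/(1+λ)}, P^λ(x) = Q(x)^{1/(1+λ)}/Z(λ), and γ(λ) = λR − (1+λ) ln Z(λ). Then γ is differentiable on (−1, ∞) and γ'(λ) = R − H(P^λ) for every λ > −1; in particular γ'(λ) = 0 if and only if H(P^λ) = R. -/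
/-!
Write `t = 1 / (1 + λ)` and `w = Q ^ t`, so that `Z = ∑ w` and `P^λ = w / Z`. Since
`d/dλ Q ^ t = -(w log w) / (1 + λ)`, the factor `1 + λ` in `γ` cancels and
`γ'(λ) = R - (log Z - (∑ w log w) / Z)`; the bracket is exactly the entropy of `w / Z`.
-/

open Real Finset

noncomputable section

def tiltedPartition {S : Type*} [Fintype S] (Q : S → ℝ) (l : ℝ) : ℝ :=
  ∑ x, Q x ^ (1 / (1 + l))

/- Holds without positivity: zero weights, or a zero total, contribute `0` to both sides
since `0 * log 0 = 0`, `log 0 = 0` and `x / 0 = 0`. -/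
theorem neg_sum_div_sum_mul_log_div_sum {S : Type*} [Fintype S] (w : S → ℝ) :
    -∑ x, w x / (∑ y, w y) * log (w x / ∑ y, w y) =
      log (∑ x, w x) - (∑ x, w x * log (w x)) / ∑ x, w x := by
  set Z := ∑ x, w x
  rcases eq_or_ne Z 0 with hZ | hZ
  · simp [hZ]
  have hterm : ∀ x, w x / Z * log (w x / Z) = (w x * log (w x) - w x * log Z) / Z := by
    intro x
    rcases eq_or_ne (w x) 0 with hx | hx
    · simp [hx]
    · rw [log_div hx hZ]; ring
  simp only [hterm, ← sum_div, sum_sub_distrib, ← sum_mul]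
  field_simp
  ring

theorem hasDerivAt_rpow_one_div_one_add {q l : ℝ} (hq : 0 < q) (hl : 1 + l ≠ 0) :
    HasDerivAt (fun m => q ^ (1 / (1 + m)))
      (-(q ^ (1 / (1 + l)) * log (q ^ (1 / (1 + l)))) / (1 + l)) l := by
  have hexp : HasDerivAt (fun m : ℝ => 1 / (1 + m)) (-1 / (1 + l) ^ 2) l := by
    simpa [one_div] using ((hasDerivAt_id l).const_add 1).fun_inv hl
  refine ((hasStrictDerivAt_const_rpow hq (1 / (1 + l))).hasDerivAt.comp l hexp).congr_deriv ?_
  rw [log_rpow hq]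
  field_simp

theorem hasDerivAt_tiltedPartition {S : Type*} [Fintype S] {Q : S → ℝ} (hQ : ∀ x, 0 < Q x)
    {l : ℝ} (hl : 1 + l ≠ 0) :
    HasDerivAt (tiltedPartition Q)
      (-(∑ x, Q x ^ (1 / (1 + l)) * log (Q x ^ (1 / (1 + l)))) / (1 + l)) l := by
  refine (HasDerivAt.fun_sum fun x _ => hasDerivAt_rpow_one_div_one_add (hQ x) hl).congr_deriv ?_
  rw [← sum_div, sum_neg_distrib]

theorem tiltedPartition_pos {S : Type*} [Fintype S] [Nonempty S] {Q : S → ℝ}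
    (hQ : ∀ x, 0 < Q x) (l : ℝ) : 0 < tiltedPartition Q l :=
  sum_pos (fun x _ => rpow_pos_of_pos (hQ x) _) univ_nonempty

theorem hasDerivAt_mul_sub_mul_log_tiltedPartition {S : Type*} [Fintype S] [Nonempty S]
    {Q : S → ℝ} (hQ : ∀ x, 0 < Q x) (R : ℝ) {l : ℝ} (hl : 1 + l ≠ 0) :
    HasDerivAt (fun m => m * R - (1 + m) * log (tiltedPartition Q m))
      (R - (log (tiltedPartition Q l) -
        (∑ x, Q x ^ (1 / (1 + l)) * log (Q x ^ (1 / (1 + l)))) / tiltedPartition Q l)) l := by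
  have hlog := (hasDerivAt_tiltedPartition hQ hl).log (tiltedPartition_pos hQ l).ne'
  refine (((hasDerivAt_id l).mul_const R).fun_sub
    (((hasDerivAt_id l).const_add 1).fun_mul hlog)).congr_deriv ?_
  simp only [id, one_mul, mul_div_assoc', mul_div_cancel_left₀ _ hl]
  ring

end

/-- For `γ(λ) = λR - (1+λ) ln Z(λ)` with `Z(λ) = ∑ Q(x)^{1/(1+λ)}`, the function
`γ` is differentiable on `(-1, ∞)` with `γ'(λ) = R - H(P^λ)`, where `P^λ` is the
tilted distribution; in particular `γ'(λ) = 0` iff `H(P^λ) = R`. -/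
theorem deriv_error_exponent (S : Type*) [Fintype S]
    (Q : S → ℝ) (hQpos : ∀ x, 0 < Q x) (hQsum : ∑ x, Q x = 1) (R : ℝ)
    (γ : ℝ → ℝ)
    (hγ : ∀ l, γ l = l * R - (1 + l) * Real.log (∑ x, Q x ^ (1 / (1 + l))))
    (H : ℝ → ℝ)
    (hH : ∀ l, H l =
      -∑ x, (Q x ^ (1 / (1 + l)) / ∑ y, Q y ^ (1 / (1 + l))) *
        Real.log (Q x ^ (1 / (1 + l)) / ∑ y, Q y ^ (1 / (1 + l)))) :
    ∀ l : ℝ, -1 < l →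
      HasDerivAt γ (R - H l) l ∧ (deriv γ l = 0 ↔ H l = R) := by
  intro l hl
  have hS : Nonempty S := by
    by_contra h
    simp [not_nonempty_iff.mp h] at hQsum
  have hγ' : HasDerivAt γ (R - H l) l := by
    rw [funext hγ, hH l, neg_sum_div_sum_mul_log_div_sum]
    exact hasDerivAt_mul_sub_mul_log_tiltedPartition hQpos R (by linarith)
  refine ⟨hγ', ?_⟩
  rw [hγ'.deriv, sub_eq_zero, eq_comm]
end

section
/- Let S be a finite alphabet and P, Q : S → ℝ probability distributions with P(x) > 0 and Q(x) > 0 for all x. Define f(t) = D( (1−t)P + tQ ‖ Q ) for t ∈ [0, 1). Then f is differentiable at 0 with f'(0) = −( D(P‖Q) + D(Q‖P) ). (This yields the critical exponent γ₀(P,Q) = D(P‖Q)/(D(P‖Q)+D(Q‖P)) of the composition-class renormalization-group flow.) -/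
open Real Finset

/-! Each summand `u log (u / Q x)` of the relative entropy along the flow `u = (1 - t) P x + t Q x`
has derivative `(Q x - P x) (log (u / Q x) + 1)`. At `t = 0` the constant terms sum to
`∑ Q - ∑ P = 0`, and `(Q - P) log (P / Q) = P log (P / Q) - Q log (P / Q)` splits the rest into
`-D(P‖Q) - D(Q‖P)`. -/

noncomputable def relEntropy {S : Type*} [Fintype S] (P Q : S → ℝ) : ℝ :=
  ∑ x, P x * log (P x / Q x)

lemma hasDerivAt_affine_path (p q t : ℝ) :
    HasDerivAt (fun s : ℝ => (1 - s) * p + s * q) (q - p) t :=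
  ((((hasDerivAt_id' t).const_sub 1).mul_const p).fun_add
    ((hasDerivAt_id' t).mul_const q)).congr_deriv (by ring)

lemma hasDerivAt_mul_log_div_const {u : ℝ → ℝ} {u' t c : ℝ} (hu : HasDerivAt u u' t)
    (ht : u t ≠ 0) (hc : c ≠ 0) :
    HasDerivAt (fun s => u s * log (u s / c)) (u' * (log (u t / c) + 1)) t :=
  (hu.fun_mul ((hu.div_const c).log (div_ne_zero ht hc))).congr_deriv (by field_simp)

lemma hasDerivAt_relEntropy_linear_flow {S : Type*} [Fintype S] (P Q : S → ℝ) (t : ℝ)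
    (ht : ∀ x, (1 - t) * P x + t * Q x ≠ 0) (hQ : ∀ x, Q x ≠ 0) :
    HasDerivAt (fun s => relEntropy (fun x => (1 - s) * P x + s * Q x) Q)
      (∑ x, (Q x - P x) * (log (((1 - t) * P x + t * Q x) / Q x) + 1)) t :=
  HasDerivAt.fun_sum fun x _ =>
    hasDerivAt_mul_log_div_const (hasDerivAt_affine_path (P x) (Q x) t) (ht x) (hQ x)

lemma sum_sub_mul_log_div_add_one {S : Type*} [Fintype S] (P Q : S → ℝ)
    (hsum : ∑ x, P x = ∑ x, Q x) :
    ∑ x, (Q x - P x) * (log (P x / Q x) + 1) = -(relEntropy P Q + relEntropy Q P) := by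
  have hswap : ∀ x, log (Q x / P x) = -log (P x / Q x) := fun x => by
    rw [← log_inv, inv_div]
  simp only [relEntropy, hswap, mul_add, sub_mul, mul_one, mul_neg, sum_add_distrib,
    sum_sub_distrib, sum_neg_distrib, hsum]
  ring

/-- Derivative of relative entropy along the linear flow toward `Q`:
for `f(t) = D((1-t)P + tQ ‖ Q)`, one has `f'(0) = -(D(P‖Q) + D(Q‖P))`. -/
theorem deriv_relEntropy_linear_flow (S : Type*) [Fintype S]
    (P Q : S → ℝ) (hPpos : ∀ x, 0 < P x) (hQpos : ∀ x, 0 < Q x)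
    (hPsum : ∑ x, P x = 1) (hQsum : ∑ x, Q x = 1)
    (f : ℝ → ℝ)
    (hf : ∀ t, f t = ∑ x, ((1 - t) * P x + t * Q x) *
      Real.log (((1 - t) * P x + t * Q x) / Q x)) :
    HasDerivAt f
      (-((∑ x, P x * Real.log (P x / Q x)) + (∑ x, Q x * Real.log (Q x / P x)))) 0 := by
  have hflow := hasDerivAt_relEntropy_linear_flow P Q 0 (fun x => by simpa using (hPpos x).ne')
    (fun x => (hQpos x).ne')
  have hsplit := sum_sub_mul_log_div_add_one P Q (hPsum.trans hQsum.symm)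
  rw [funext hf]
  simpa only [sub_zero, one_mul, zero_mul, add_zero, hsplit, relEntropy] using hflow
end

section
/- Let S be a finite alphabet with N = |S| letters, let n ≥ 1, and let R ∈ ℝ. Then the set A_pass = { x⃗ ∈ S^n : H(P_{x⃗}) ≤ R − N·ln(n+1)/n } has cardinality at most e^{nR}. -/
open Finset

/-- The set `A_pass` of words accepted by the Csiszár–Körner universal code of
rate `R`, namely words `x⃗ ∈ S^n` whose empirical distribution `P_{x⃗}` satisfies
`H(P_{x⃗}) ≤ R - N ln(n+1)/n`, has at most `e^{nR}` elements. -/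
theorem card_A_pass_le (S : Type*) [Fintype S] [DecidableEq S]
    (n : ℕ) (hn : 1 ≤ n) (R : ℝ)
    (Pemp : (Fin n → S) → S → ℝ)
    (hPemp : ∀ (x : Fin n → S) (a : S),
      Pemp x a = ((Finset.univ.filter (fun i => x i = a)).card : ℝ) / (n : ℝ)) :
    (Nat.card {x : Fin n → S //
        -∑ a : S, Pemp x a * Real.log (Pemp x a) ≤
          R - (Fintype.card S : ℝ) * Real.log ((n : ℝ) + 1) / (n : ℝ)} : ℝ) ≤
      Real.exp ((n : ℝ) * R) := by
  classical
  have hn0 : (0:ℝ) < (n : ℝ) := by exact_mod_cast hn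
  set N := Fintype.card S with hN
  -- the count (composition) function
  set cnt : (Fin n → S) → S → ℕ := fun x a => (univ.filter fun i => x i = a).card
    with hcnt
  have hsum : ∀ x : Fin n → S, ∑ a, cnt x a = n := by
    intro x
    have := Finset.card_eq_sum_card_fiberwise
      (f := x) (s := (univ : Finset (Fin n))) (t := univ) (fun i _ => mem_univ _)
    simpa [cnt] using this.symm
  have hcnt_le : ∀ (x : Fin n → S) (a : S), cnt x a ≤ n := by
    intro x a
    simpa using Finset.card_filter_le (univ : Finset (Fin n)) (fun i => x i = a)
  -- the accepted set as a Finset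
  set cond : (Fin n → S) → Prop := fun x =>
    -∑ a : S, Pemp x a * Real.log (Pemp x a) ≤
      R - (N : ℝ) * Real.log ((n : ℝ) + 1) / (n : ℝ) with hcond
  set A : Finset (Fin n → S) := univ.filter cond with hA
  have hcard : (Nat.card {x : Fin n → S // cond x} : ℝ) = (A.card : ℝ) := by
    rw [Nat.card_eq_fintype_card, Fintype.card_subtype]
  rw [show (Nat.card {x : Fin n → S //
        -∑ a : S, Pemp x a * Real.log (Pemp x a) ≤
          R - (Fintype.card S : ℝ) * Real.log ((n : ℝ) + 1) / (n : ℝ)}) =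
      Nat.card {x : Fin n → S // cond x} from rfl, hcard]
  -- key bound on each composition class
  have class_bound : ∀ t : S → ℕ, (∑ a, t a = n) →
      ((univ.filter fun x : Fin n → S => cnt x = t).card : ℝ) ≤
        Real.exp (-∑ a, (t a : ℝ) * Real.log ((t a : ℝ) / n)) := by
    intro t ht
    set P : S → ℝ := fun a => (t a : ℝ) / n with hP
    have hPnn : ∀ a, 0 ≤ P a := fun a => by positivity
    have hPsum : ∑ a, P a = 1 := by
      rw [hP, ← Finset.sum_div]
      rw [show ∑ a, ((t a : ℝ)) = (n : ℝ) by exact_mod_cast congrArg Nat.cast ht]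
      field_simp
    -- each word of type t has product weight exp(∑ t a log P a)
    have hw : ∀ x : Fin n → S, cnt x = t →
        ∏ i, P (x i) = Real.exp (∑ a, (t a : ℝ) * Real.log (P a)) := by
      intro x hx
      have h1 : ∏ i, P (x i) = ∏ a, P a ^ (cnt x a) := by
        rw [← Finset.prod_fiberwise' (univ : Finset (Fin n)) x P]
        exact Finset.prod_congr rfl fun a _ => Finset.prod_const _
      rw [h1, hx, Real.exp_sum]
      refine Finset.prod_congr rfl fun a _ => ?_
      rcases Nat.eq_zero_or_pos (t a) with h | h
      · simp [h]
      · have hp : (0:ℝ) < P a := by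
          have : (0:ℝ) < (t a : ℝ) := by exact_mod_cast h
          positivity
        rw [← Real.exp_log hp, ← Real.exp_nat_mul, Real.exp_log hp]
    -- total weight over all words is 1
    have htot : ∑ x : Fin n → S, ∏ i, P (x i) = 1 := by
      have := (Fintype.sum_pow P n).symm
      rw [this, hPsum, one_pow]
    have hsub : ∑ x ∈ (univ.filter fun x : Fin n → S => cnt x = t), ∏ i, P (x i) ≤ 1 := by
      rw [← htot]
      refine Finset.sum_le_sum_of_subset_of_nonneg (Finset.filter_subset _ _) ?_
      intro x _ _
      exact Finset.prod_nonneg fun i _ => hPnn _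
    have hval : ∑ x ∈ (univ.filter fun x : Fin n → S => cnt x = t), ∏ i, P (x i) =
        ((univ.filter fun x : Fin n → S => cnt x = t).card : ℝ) *
          Real.exp (∑ a, (t a : ℝ) * Real.log (P a)) := by
      rw [Finset.sum_congr rfl (fun x hx => hw x (by simpa using (Finset.mem_filter.1 hx).2))]
      rw [Finset.sum_const, nsmul_eq_mul]
    rw [hval] at hsub
    have hexp : (0:ℝ) < Real.exp (∑ a, (t a : ℝ) * Real.log (P a)) := Real.exp_pos _
    have := (le_div_iff₀ hexp).2 hsub
    calc ((univ.filter fun x : Fin n → S => cnt x = t).card : ℝ)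
        ≤ 1 / Real.exp (∑ a, (t a : ℝ) * Real.log (P a)) := this
      _ = Real.exp (-∑ a, (t a : ℝ) * Real.log ((t a : ℝ) / n)) := by
          rw [one_div, ← Real.exp_neg]
  -- decompose A along composition classes
  set T : Finset (S → ℕ) := A.image cnt with hT
  have hsplit : (A.card : ℝ) = ∑ t ∈ T, ((A.filter fun x => cnt x = t).card : ℝ) := by
    have := Finset.card_eq_sum_card_fiberwise
      (f := cnt) (s := A) (t := T) (fun x hx => Finset.mem_image_of_mem _ hx)
    exact_mod_cast congrArg Nat.cast this
  -- each class appearing in T satisfies the entropy bound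
  have hclassA : ∀ t ∈ T, ((A.filter fun x => cnt x = t).card : ℝ) ≤
      Real.exp ((n : ℝ) * R - (N : ℝ) * Real.log ((n : ℝ) + 1)) := by
    intro t ht
    obtain ⟨x, hxA, hxt⟩ := Finset.mem_image.1 ht
    have hxcond : cond x := (Finset.mem_filter.1 hxA).2
    -- rewrite entropy condition in terms of t
    have hPemp' : ∀ a, Pemp x a = (t a : ℝ) / n := by
      intro a; rw [hPemp x a, ← hxt]
    have hent : -∑ a, (t a : ℝ) * Real.log ((t a : ℝ) / n) ≤
        (n : ℝ) * R - (N : ℝ) * Real.log ((n : ℝ) + 1) := by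
      have h1 : -∑ a : S, Pemp x a * Real.log (Pemp x a) ≤
          R - (N : ℝ) * Real.log ((n : ℝ) + 1) / (n : ℝ) := hxcond
      have h2 : ∑ a : S, Pemp x a * Real.log (Pemp x a) =
          (∑ a, (t a : ℝ) * Real.log ((t a : ℝ) / n)) / n := by
        rw [Finset.sum_div]
        refine Finset.sum_congr rfl fun a _ => ?_
        rw [hPemp' a]; ring
      rw [h2] at h1
      have := mul_le_mul_of_nonneg_left h1 (le_of_lt hn0)
      calc -∑ a, (t a : ℝ) * Real.log ((t a : ℝ) / n)
          = (n : ℝ) * -((∑ a, (t a : ℝ) * Real.log ((t a : ℝ) / n)) / n) := by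
            field_simp
        _ ≤ (n : ℝ) * (R - (N : ℝ) * Real.log ((n : ℝ) + 1) / (n : ℝ)) := this
        _ = (n : ℝ) * R - (N : ℝ) * Real.log ((n : ℝ) + 1) := by field_simp
    have hsumt : ∑ a, t a = n := by rw [← hxt]; exact hsum x
    calc ((A.filter fun x => cnt x = t).card : ℝ)
        ≤ ((univ.filter fun x : Fin n → S => cnt x = t).card : ℝ) := by
          exact_mod_cast Finset.card_le_card
            (Finset.filter_subset_filter _ (Finset.filter_subset _ _))
      _ ≤ Real.exp (-∑ a, (t a : ℝ) * Real.log ((t a : ℝ) / n)) := class_bound t hsumt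
      _ ≤ Real.exp ((n : ℝ) * R - (N : ℝ) * Real.log ((n : ℝ) + 1)) :=
          Real.exp_le_exp.2 hent
  -- bound the number of types
  have hTcard : (T.card : ℝ) ≤ ((n + 1 : ℕ) : ℝ) ^ N := by
    have hinj : ∀ t ∈ T, ∀ t' ∈ T,
        (fun a => (⟨min (t a) n, Nat.lt_succ_of_le (min_le_right _ _)⟩ : Fin (n+1))) =
        (fun a => (⟨min (t' a) n, Nat.lt_succ_of_le (min_le_right _ _)⟩ : Fin (n+1))) →
        t = t' := by
      intro t ht t' ht' h
      obtain ⟨x, _, hxt⟩ := Finset.mem_image.1 ht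
      obtain ⟨x', _, hxt'⟩ := Finset.mem_image.1 ht'
      funext a
      have h1 : min (t a) n = t a := min_eq_left (by rw [← hxt]; exact hcnt_le x a)
      have h2 : min (t' a) n = t' a := min_eq_left (by rw [← hxt']; exact hcnt_le x' a)
      have := congrFun h a
      rw [Fin.mk.injEq, h1, h2] at this
      exact this
    have := Finset.card_le_card_of_injOn
      (f := fun (t : S → ℕ) (a : S) =>
        (⟨min (t a) n, Nat.lt_succ_of_le (min_le_right _ _)⟩ : Fin (n+1)))
      (fun t _ => Finset.mem_univ _) (fun t ht t' ht' h => hinj t ht t' ht' h)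
    have hcu : (univ : Finset (S → Fin (n+1))).card = (n+1) ^ N := by
      rw [Finset.card_univ, Fintype.card_fun, Fintype.card_fin]
    calc (T.card : ℝ) ≤ ((univ : Finset (S → Fin (n+1))).card : ℝ) := by exact_mod_cast this
      _ = ((n + 1 : ℕ) : ℝ) ^ N := by rw [hcu]; push_cast; ring
  -- assemble
  have hfinal : (A.card : ℝ) ≤
      (T.card : ℝ) * Real.exp ((n : ℝ) * R - (N : ℝ) * Real.log ((n : ℝ) + 1)) := by
    rw [hsplit]
    calc ∑ t ∈ T, ((A.filter fun x => cnt x = t).card : ℝ)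
        ≤ ∑ t ∈ T, Real.exp ((n : ℝ) * R - (N : ℝ) * Real.log ((n : ℝ) + 1)) :=
          Finset.sum_le_sum hclassA
      _ = (T.card : ℝ) * Real.exp ((n : ℝ) * R - (N : ℝ) * Real.log ((n : ℝ) + 1)) := by
          rw [Finset.sum_const, nsmul_eq_mul]
  have hexp_split : Real.exp ((n : ℝ) * R - (N : ℝ) * Real.log ((n : ℝ) + 1)) =
      Real.exp ((n : ℝ) * R) / (((n + 1 : ℕ) : ℝ) ^ N) := by
    have hx : Real.exp ((N : ℝ) * Real.log ((n : ℝ) + 1)) = ((n : ℝ) + 1) ^ N := by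
      rw [Real.exp_nat_mul, Real.exp_log (by positivity : (0:ℝ) < (n : ℝ) + 1)]
    rw [Real.exp_sub, hx]
    push_cast; ring
  calc (A.card : ℝ)
      ≤ (T.card : ℝ) * Real.exp ((n : ℝ) * R - (N : ℝ) * Real.log ((n : ℝ) + 1)) := hfinal
    _ ≤ ((n + 1 : ℕ) : ℝ) ^ N * (Real.exp ((n : ℝ) * R) / (((n + 1 : ℕ) : ℝ) ^ N)) := by
        rw [hexp_split]
        exact mul_le_mul_of_nonneg_right hTcard (by positivity)
    _ = Real.exp ((n : ℝ) * R) := by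
        field_simp
end
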